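/- arXiv:0803.3326 — 6 statements merged into one kernel-verified Lean document; each statement's English description precedes it below -/
import Mathlib

section
/- Let $X$ be a reflexive Banach space and $D$ a group of linear isometries of $X$ such that whenever $g_k \in D$ does not converge weakly (in operator sense, elementwise) to $0$ on a subsequence and $u_k \rightharpoonup 0$, then $g_k u_k \rightharpoonup 0$ on a subsequence. If $g_k, h_k \in D$ satisfy $h_k^{-1} g_k \rightharpoonup 0$ (elementwise weakly), then also $g_k^{-1} h_k \rightharpoonup 0$ (elementwise weakly) on every subsequence along which it converges; more precisely, it is impossible that $g_k^{-1} h_k \not\rightharpoonup 0$. -/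
open Filter Topology

/-- Weak convergence of a sequence to `0` in a normed space. -/
def WeakNull {X : Type*} [NormedAddCommGroup X] [NormedSpace ℝ X]
    (u : ℕ → X) : Prop :=
  ∀ φ : X →L[ℝ] ℝ, Tendsto (fun k => φ (u k)) atTop (𝓝 0)

/-- Elementwise weak convergence to `0` of a sequence of operators. -/
def OpWeakNull {X : Type*} [NormedAddCommGroup X] [NormedSpace ℝ X]
    (g : ℕ → X ≃ₗᵢ[ℝ] X) : Prop :=
  ∀ x : X, WeakNull (fun k => g k x)

/-! The inverse dislocations `g_k⁻¹ h_k` and `h_k⁻¹ g_k` compose to the identity. If the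
first were not weakly null, the transfer property applied to `u_k = h_k⁻¹ g_k x ⇀ 0` would
make the constant sequence `x = g_k⁻¹ h_k u_k` weakly null along a subsequence, which forces
`x = 0` by Hahn–Banach; taking `x ≠ 0` gives the contradiction. -/

theorem weakNull_const_iff {X : Type*} [NormedAddCommGroup X] [NormedSpace ℝ X] {x : X} :
    WeakNull (fun _ => x) ↔ x = 0 := by
  refine ⟨fun hx => SeparatingDual.eq_zero_of_forall_dual_eq_zero (R := ℝ) fun φ => ?_, ?_⟩
  · exact tendsto_nhds_unique tendsto_const_nhds (hx φ)
  · rintro rfl φ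
    simp only [map_zero, tendsto_const_nhds]

theorem inverse_dislocations_weakly_null_general {X : Type*} [NormedAddCommGroup X]
    [NormedSpace ℝ X] [Nontrivial X]
    (D : Subgroup (X ≃ₗᵢ[ℝ] X))
    -- the transfer property (newii): if `g_k ∈ D`, `g_k ̸⇀ 0`, and
    -- `u_k ⇀ 0`, then `g_k u_k ⇀ 0` on a subsequence
    (hnewii : ∀ g : ℕ → X ≃ₗᵢ[ℝ] X, (∀ k, g k ∈ D) →
      ¬ OpWeakNull g → ∀ u : ℕ → X, WeakNull u →
        ∃ ψ : ℕ → ℕ, StrictMono ψ ∧ WeakNull (fun k => g (ψ k) (u (ψ k))))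
    (g h : ℕ → X ≃ₗᵢ[ℝ] X) (hg : ∀ k, g k ∈ D) (hh : ∀ k, h k ∈ D)
    (hgh : OpWeakNull (fun k => (h k)⁻¹ * g k)) :
    ¬ ¬ OpWeakNull (fun k => (g k)⁻¹ * h k) := by
  intro hne
  obtain ⟨x, hx⟩ := exists_ne (0 : X)
  obtain ⟨ψ, -, hnull⟩ := hnewii (fun k => (g k)⁻¹ * h k)
    (fun k => D.mul_mem (D.inv_mem (hg k)) (hh k)) hne _ (hgh x)
  have hcancel : ∀ k, ((g k)⁻¹ * h k) (((h k)⁻¹ * g k) x) = x := fun k => by simp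
  simp only [hcancel, weakNull_const_iff] at hnull
  exact hx hnull

/-- in a reflexive Banach space with a group `D` of linear
isometries satisfying the dislocation transfer property, if
`h_k⁻¹ g_k ⇀ 0` elementwise then it is impossible that `g_k⁻¹ h_k ̸⇀ 0`. -/
theorem inverse_dislocations_weakly_null {X : Type*} [NormedAddCommGroup X]
    [NormedSpace ℝ X] [CompleteSpace X] [Nontrivial X]
    (D : Subgroup (X ≃ₗᵢ[ℝ] X))
    -- reflexivity, in the form used: bounded sequences have weakly convergent
    -- subsequences
    (hrefl : ∀ u : ℕ → X, (∃ C : ℝ, ∀ k, ‖u k‖ ≤ C) →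
      ∃ (ψ : ℕ → ℕ) (w : X), StrictMono ψ ∧
        ∀ φ : X →L[ℝ] ℝ, Tendsto (fun k => φ (u (ψ k))) atTop (𝓝 (φ w)))
    -- the transfer property (newii): if `g_k ∈ D`, `g_k ̸⇀ 0`, and
    -- `u_k ⇀ 0`, then `g_k u_k ⇀ 0` on a subsequence
    (hnewii : ∀ g : ℕ → X ≃ₗᵢ[ℝ] X, (∀ k, g k ∈ D) →
      ¬ OpWeakNull g → ∀ u : ℕ → X, WeakNull u →
        ∃ ψ : ℕ → ℕ, StrictMono ψ ∧ WeakNull (fun k => g (ψ k) (u (ψ k))))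
    (g h : ℕ → X ≃ₗᵢ[ℝ] X) (hg : ∀ k, g k ∈ D) (hh : ∀ k, h k ∈ D)
    (hgh : OpWeakNull (fun k => (h k)⁻¹ * g k)) :
    ¬ ¬ OpWeakNull (fun k => (g k)⁻¹ * h k) :=
  inverse_dislocations_weakly_null_general D hnewii g h hg hh hgh
end

section
/- Weak subadditivity of the isoperimetric constants: Let $F, G : X \to [0,\infty)$ be functionals on a Banach space $X$ and $D$ a group of linear operators on $X$ preserving both $F$ and $G$, containing a sequence $g_k$ with $g_k \rightharpoonup 0$ elementwise weakly. Assume the asymptotic additivity properties: for any $v, w \in X$ and $g_k \rightharpoonup 0$ in $D$, $G(v + g_k w) \to G(v) + G(w)$ and $F(v + g_k w) \to F(v) + F(w)$. Define $c_t = \inf\{F(u) : u \in X, G(u) = t\}$ for $t > 0$ (and $c_0 = 0$). Then for every $\tau \in [0, t]$, $c_t \le c_\tau + c_{t-\tau}$, provided the constraint sets $\{G = \tau\}$ and $\{G = t - \tau\}$ are nonempty and $G$ takes each intermediate value along the constructed sequence (assume $G$ continuous and the asymptotic value $t$ is attained in the limit as an infimum bound). -/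
open Filter Topology

/-- weak subadditivity `c_t ≤ c_τ + c_{t-τ}` of the isoperimetric
constants `c_s = inf {F(u) : G(u) = s}` (with `c_0 = 0`), under asymptotic
additivity of `F` and `G` along a weakly null sequence of operators from `D`. -/
theorem isoperimetric_weak_subadditivity {X : Type*}
    [NormedAddCommGroup X] [NormedSpace ℝ X] [CompleteSpace X]
    (F G : X → ℝ)
    (hF_nonneg : ∀ u, 0 ≤ F u) (hG_nonneg : ∀ u, 0 ≤ G u)
    (hF_cont : Continuous F) (hG_cont : Continuous G)
    (D : Subgroup (X ≃ₗᵢ[ℝ] X))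
    (hD_F : ∀ g ∈ D, ∀ u : X, F (g u) = F u)
    (hD_G : ∀ g ∈ D, ∀ u : X, G (g u) = G u)
    -- `D` contains a sequence converging elementwise weakly to zero
    (g : ℕ → X ≃ₗᵢ[ℝ] X) (hgD : ∀ k, g k ∈ D)
    (hg_null : ∀ x : X, WeakNull (fun k => g k x))
    -- asymptotic additivity along any weakly null sequence of `D`
    (hF_add : ∀ (h : ℕ → X ≃ₗᵢ[ℝ] X), (∀ k, h k ∈ D) →
      (∀ x : X, WeakNull (fun k => h k x)) → ∀ v w : X,
      Tendsto (fun k => F (v + h k w)) atTop (𝓝 (F v + F w)))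
    (hG_add : ∀ (h : ℕ → X ≃ₗᵢ[ℝ] X), (∀ k, h k ∈ D) →
      (∀ x : X, WeakNull (fun k => h k x)) → ∀ v w : X,
      Tendsto (fun k => G (v + h k w)) atTop (𝓝 (G v + G w)))
    -- all positive constraint levels are attained
    (hlevel : ∀ s : ℝ, 0 < s → ∃ u : X, G u = s)
    -- near-minimizers can be perturbed onto the exact constraint
    (hpert : ∀ s : ℝ, 0 < s → ∀ ε : ℝ, 0 < ε → ∃ δ : ℝ, 0 < δ ∧
      ∀ u : X, |G u - s| < δ → ∃ u' : X, G u' = s ∧ F u' ≤ F u + ε) :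
    ∀ t τ : ℝ, 0 < t → τ ∈ Set.Icc (0 : ℝ) t →
      (fun s : ℝ => if s = 0 then (0 : ℝ) else sInf (F '' {u | G u = s})) t ≤
        (fun s : ℝ => if s = 0 then (0 : ℝ) else sInf (F '' {u | G u = s})) τ +
        (fun s : ℝ => if s = 0 then (0 : ℝ) else sInf (F '' {u | G u = s}))
          (t - τ) := by
  intro t τ ht hτ
  obtain ⟨hτ0, hτt⟩ := hτ
  set c : ℝ → ℝ := fun s : ℝ => if s = 0 then (0 : ℝ) else sInf (F '' {u | G u = s})
    with hc
  show c t ≤ c τ + c (t - τ)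
  have hbdd : ∀ s : ℝ, BddBelow (F '' {u | G u = s}) := by
    intro s
    exact ⟨0, fun x ⟨u, _, hu⟩ => hu ▸ hF_nonneg u⟩
  -- degenerate cases
  rcases eq_or_lt_of_le hτ0 with h0 | h0
  · simp [hc, ← h0]
  rcases eq_or_lt_of_le hτt with h1 | h1
  · simp [hc, h1, ht.ne']
  -- main case: 0 < τ < t
  have htτ : 0 < t - τ := sub_pos.mpr h1
  have hct : c t = sInf (F '' {u | G u = t}) := by simp [hc, ht.ne']
  have hcτ : c τ = sInf (F '' {u | G u = τ}) := by simp [hc, h0.ne']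
  have hctτ : c (t - τ) = sInf (F '' {u | G u = t - τ}) := by simp [hc, htτ.ne']
  rw [hct, hcτ, hctτ]
  refine le_of_forall_pos_le_add (fun ε hε => ?_)
  have hε4 : 0 < ε / 4 := by linarith
  -- near-minimizers for τ and t - τ
  have hne1 : (F '' {u | G u = τ}).Nonempty := by
    obtain ⟨v, hv⟩ := hlevel τ h0; exact ⟨F v, v, hv, rfl⟩
  have hne2 : (F '' {u | G u = t - τ}).Nonempty := by
    obtain ⟨w, hw⟩ := hlevel (t - τ) htτ; exact ⟨F w, w, hw, rfl⟩
  obtain ⟨a, ⟨v, hGv, rfl⟩, hav⟩ := Real.lt_sInf_add_pos hne1 hε4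
  obtain ⟨b, ⟨w, hGw, rfl⟩, hbw⟩ := Real.lt_sInf_add_pos hne2 hε4
  obtain ⟨δ, hδ, hδp⟩ := hpert t ht (ε / 4) hε4
  have hGlim := hG_add g hgD hg_null v w
  have hFlim := hF_add g hgD hg_null v w
  rw [hGv, hGw] at hGlim
  have hGlim' : Tendsto (fun k => G (v + g k w)) atTop (𝓝 t) := by
    simpa using hGlim
  have h1' : ∀ᶠ k in atTop, |G (v + g k w) - t| < δ :=
    hGlim'.eventually (eventually_abs_sub_lt t hδ)
  have h2' : ∀ᶠ k in atTop, F (v + g k w) < F v + F w + ε / 4 :=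
    hFlim.eventually_lt_const (by linarith)
  obtain ⟨k, hk1, hk2⟩ := (h1'.and h2').exists
  obtain ⟨u', hGu', hFu'⟩ := hδp _ hk1
  have hmem : F u' ∈ F '' {u | G u = t} := ⟨u', hGu', rfl⟩
  have := csInf_le (hbdd t) hmem
  calc sInf (F '' {u | G u = t}) ≤ F u' := this
    _ ≤ F (v + g k w) + ε / 4 := hFu'
    _ ≤ F v + F w + ε / 4 + ε / 4 := by linarith
    _ ≤ sInf (F '' {u | G u = τ}) + sInf (F '' {u | G u = t - τ}) + ε := by linarith
end

section
/- Coercivity from cocompactness: Let $(X, F, D)$ be a dislocation space (in particular $F$ is even, convex, continuous, $F^{-1}(0)=\{0\}$, weakly lower semicontinuous, $D$-invariant, and $X$ reflexive), let $X$ be cocompactly embedded into a Banach space $Y$ relative to $D$, and let $G : Y \to [0,\infty)$ be continuous on $Y$ with $G(0) = 0$. Then for all $a, b > 0$, $\inf\{F(u) : u \in X, G(au) > b\} > 0$. -/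
open Filter Topology

/-- Weak convergence of a sequence in a normed space. -/
def WeakConv {X : Type*} [NormedAddCommGroup X] [NormedSpace ℝ X]
    (u : ℕ → X) (w : X) : Prop :=
  ∀ φ : X →L[ℝ] ℝ, Tendsto (fun k => φ (u k)) atTop (𝓝 (φ w))

section WeakNull

variable {X : Type*} [NormedAddCommGroup X] [NormedSpace ℝ X] {F : X → ℝ}

theorem eq_zero_of_weakConv_of_tendsto_zero (hF_nonneg : ∀ u, 0 ≤ F u)
    (hF_zero : ∀ u, F u = 0 → u = 0)
    (hF_wlsc : ∀ (u : ℕ → X) (w : X), WeakConv u w →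
      F w ≤ Filter.liminf (fun k => F (u k)) atTop)
    {v : ℕ → X} {w : X} (hvw : WeakConv v w)
    (hFv : Tendsto (fun k => F (v k)) atTop (𝓝 0)) : w = 0 := by
  have hFw : F w ≤ 0 := hFv.liminf_eq ▸ hF_wlsc v w hvw
  exact hF_zero w (le_antisymm hFw (hF_nonneg w))

theorem weakNull_of_tendsto_zero (hF_nonneg : ∀ u, 0 ≤ F u)
    (hF_zero : ∀ u, F u = 0 → u = 0)
    (hF_wlsc : ∀ (u : ℕ → X) (w : X), WeakConv u w →
      F w ≤ Filter.liminf (fun k => F (u k)) atTop)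
    (hrefl : ∀ u : ℕ → X, (∃ C : ℝ, ∀ k, ‖u k‖ ≤ C) →
      ∃ (ψ : ℕ → ℕ) (w : X), StrictMono ψ ∧ WeakConv (fun k => u (ψ k)) w)
    {v : ℕ → X} (hbdd : ∃ C : ℝ, ∀ k, ‖v k‖ ≤ C)
    (hFv : Tendsto (fun k => F (v k)) atTop (𝓝 0)) : WeakNull v := by
  intro φ
  refine tendsto_of_subseq_tendsto fun ns hns => ?_
  obtain ⟨C, hC⟩ := hbdd
  obtain ⟨ψ, w, hψ, hvw⟩ := hrefl (fun k => v (ns k)) ⟨C, fun k => hC (ns k)⟩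
  have hw : w = 0 := eq_zero_of_weakConv_of_tendsto_zero hF_nonneg hF_zero hF_wlsc hvw
    (hFv.comp (hns.comp hψ.tendsto_atTop))
  exact ⟨ψ, by simpa [hw] using hvw φ⟩

theorem weakNull_isometry_of_tendsto_zero (hF_nonneg : ∀ u, 0 ≤ F u)
    (hF_zero : ∀ u, F u = 0 → u = 0)
    (hF_wlsc : ∀ (u : ℕ → X) (w : X), WeakConv u w →
      F w ≤ Filter.liminf (fun k => F (u k)) atTop)
    (hrefl : ∀ u : ℕ → X, (∃ C : ℝ, ∀ k, ‖u k‖ ≤ C) →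
      ∃ (ψ : ℕ → ℕ) (w : X), StrictMono ψ ∧ WeakConv (fun k => u (ψ k)) w)
    {D : Subgroup (X ≃ₗᵢ[ℝ] X)} (hD_F : ∀ g ∈ D, ∀ u : X, F (g u) = F u)
    {u : ℕ → X} (hbdd : ∃ C : ℝ, ∀ k, ‖u k‖ ≤ C)
    (hFu : Tendsto (fun k => F (u k)) atTop (𝓝 0))
    (g : ℕ → X ≃ₗᵢ[ℝ] X) (hg : ∀ k, g k ∈ D) : WeakNull (fun k => g k (u k)) := by
  obtain ⟨C, hC⟩ := hbdd
  refine weakNull_of_tendsto_zero hF_nonneg hF_zero hF_wlsc hrefl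
    ⟨C, fun k => (g k).norm_map (u k) ▸ hC k⟩ ?_
  simpa only [hD_F _ (hg _)] using hFu

end WeakNull

theorem coercivity_from_cocompactness_general {X Y : Type*}
    [NormedAddCommGroup X] [NormedSpace ℝ X]
    [NormedAddCommGroup Y] [NormedSpace ℝ Y]
    (ι : X →L[ℝ] Y)
    (F : X → ℝ)
    (hF_nonneg : ∀ u, 0 ≤ F u)
    (hF_zero : ∀ u, F u = 0 ↔ u = 0)
    (hF_wlsc : ∀ (u : ℕ → X) (w : X), WeakConv u w →
      F w ≤ Filter.liminf (fun k => F (u k)) atTop)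
    (hgauge : ∀ u : X, F u ≤ 1 → ‖u‖ ≤ 1)
    -- reflexivity: bounded sequences have weakly convergent subsequences
    (hrefl : ∀ u : ℕ → X, (∃ C : ℝ, ∀ k, ‖u k‖ ≤ C) →
      ∃ (ψ : ℕ → ℕ) (w : X), StrictMono ψ ∧ WeakConv (fun k => u (ψ k)) w)
    (D : Subgroup (X ≃ₗᵢ[ℝ] X))
    (hD_F : ∀ g ∈ D, ∀ u : X, F (g u) = F u)
    -- cocompactness of the embedding relative to `D`
    (hcocompact : ∀ u : ℕ → X,
      (∀ g : ℕ → X ≃ₗᵢ[ℝ] X, (∀ k, g k ∈ D) → WeakNull (fun k => g k (u k))) →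
      Tendsto (fun k => ‖ι (u k)‖) atTop (𝓝 0))
    (G : Y → ℝ)
    (hG_cont : Continuous G) (hG_zero : G 0 = 0) :
    ∀ a b : ℝ, 0 < a → 0 < b →
      ∃ ε : ℝ, 0 < ε ∧ ∀ u : X, b < G (ι (a • u)) → ε ≤ F u := by
  intro a b _ hb
  by_contra! hsmall
  choose u hGu hFu using fun k : ℕ => hsmall (1 / (k + 1)) Nat.one_div_pos_of_nat
  have hFu_le : ∀ k, F (u k) ≤ 1 := fun k =>
    (hFu k).le.trans (div_le_one_of_le₀ (by simp) (by positivity))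
  have hFu_lim : Tendsto (fun k => F (u k)) atTop (𝓝 0) :=
    squeeze_zero (fun k => hF_nonneg _) (fun k => (hFu k).le)
      tendsto_one_div_add_atTop_nhds_zero_nat
  have hιu : Tendsto (fun k => ι (u k)) atTop (𝓝 0) :=
    tendsto_zero_iff_norm_tendsto_zero.mpr <| hcocompact u <|
      weakNull_isometry_of_tendsto_zero hF_nonneg (fun u => (hF_zero u).mp) hF_wlsc hrefl hD_F
        ⟨1, fun k => hgauge _ (hFu_le k)⟩ hFu_lim
  have hGu_lim : Tendsto (fun k => G (ι (a • u k))) atTop (𝓝 0) := by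
    have haιu : Tendsto (fun k => ι (a • u k)) atTop (𝓝 0) := by
      simpa only [map_smul, smul_zero] using hιu.const_smul a
    exact hG_zero ▸ (hG_cont.tendsto 0).comp haιu
  obtain ⟨k, hk⟩ := (hGu_lim.eventually_lt_const hb).exists
  exact (hGu k).not_gt hk

/-- coercivity from cocompactness. In a dislocation space
`(X, F, D)` cocompactly embedded into `Y`, for continuous `G : Y → [0,∞)` with
`G(0) = 0` one has `inf {F(u) : G(au) > b} > 0` for all `a, b > 0`. -/
theorem coercivity_from_cocompactness {X Y : Type*}
    [NormedAddCommGroup X] [NormedSpace ℝ X] [CompleteSpace X]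
    [TopologicalSpace.SeparableSpace X]
    [NormedAddCommGroup Y] [NormedSpace ℝ Y] [CompleteSpace Y]
    (ι : X →L[ℝ] Y) (hinj : Function.Injective ι)
    (F : X → ℝ)
    (hF_nonneg : ∀ u, 0 ≤ F u)
    (hF_even : ∀ u, F (-u) = F u)
    (hF_convex : ConvexOn ℝ Set.univ F)
    (hF_zero : ∀ u, F u = 0 ↔ u = 0)
    (hF_cont : Continuous F)
    (hF_wlsc : ∀ (u : ℕ → X) (w : X), WeakConv u w →
      F w ≤ Filter.liminf (fun k => F (u k)) atTop)
    (hgauge : ∀ u : X, F u ≤ 1 → ‖u‖ ≤ 1)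
    -- reflexivity: bounded sequences have weakly convergent subsequences
    (hrefl : ∀ u : ℕ → X, (∃ C : ℝ, ∀ k, ‖u k‖ ≤ C) →
      ∃ (ψ : ℕ → ℕ) (w : X), StrictMono ψ ∧ WeakConv (fun k => u (ψ k)) w)
    (D : Subgroup (X ≃ₗᵢ[ℝ] X))
    (hD_F : ∀ g ∈ D, ∀ u : X, F (g u) = F u)
    -- cocompactness of the embedding relative to `D`
    (hcocompact : ∀ u : ℕ → X,
      (∀ g : ℕ → X ≃ₗᵢ[ℝ] X, (∀ k, g k ∈ D) → WeakNull (fun k => g k (u k))) →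
      Tendsto (fun k => ‖ι (u k)‖) atTop (𝓝 0))
    (G : Y → ℝ)
    (hG_nonneg : ∀ v, 0 ≤ G v) (hG_cont : Continuous G) (hG_zero : G 0 = 0) :
    ∀ a b : ℝ, 0 < a → 0 < b →
      ∃ ε : ℝ, 0 < ε ∧ ∀ u : X, b < G (ι (a • u)) → ε ≤ F u :=
  coercivity_from_cocompactness_general ι F hF_nonneg hF_zero hF_wlsc hgauge hrefl D hD_F hcocompact
    G hG_cont hG_zero
end

section
/- If a minimizing sequence $D$-weakly converges to a nonzero limit and the embedding is cocompact, the limit is a minimizer: Let $(X, F, D)$ be a dislocation space cocompactly embedded into $Y$, $F$ weakly lower semicontinuous, $G : Y \to \mathbb{R}$ continuous on $Y$. Suppose $u_k \in X$, $F(u_k) \to c_t := \inf\{F(u) : G(u) = t\}$, $G(u_k) \to t$, and $u_k - w \stackrel{D}{\rightharpoonup} 0$ for some $w \in X$. Then $G(w) = t$ and $F(w) = c_t$, i.e. $w$ is a minimizer. -/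
open Filter Topology

/-- if a minimizing sequence for `c_t = inf {F(u) : G(ι u) = t}`
converges `D`-weakly to `w` and the embedding is cocompact, then `w` is a
minimizer: `G(ι w) = t` and `F(w) = c_t`. -/
theorem D_weak_limit_of_minimizing_sequence_is_minimizer {X Y : Type*}
    [NormedAddCommGroup X] [NormedSpace ℝ X] [CompleteSpace X]
    [NormedAddCommGroup Y] [NormedSpace ℝ Y] [CompleteSpace Y]
    (ι : X →L[ℝ] Y) (hinj : Function.Injective ι)
    (D : Subgroup (X ≃ₗᵢ[ℝ] X))
    (F : X → ℝ) (hF_nonneg : ∀ u, 0 ≤ F u)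
    -- weak lower semicontinuity of `F`
    (hF_wlsc : ∀ (u : ℕ → X) (w : X), WeakConv u w →
      F w ≤ Filter.liminf (fun k => F (u k)) atTop)
    (G : Y → ℝ) (hG_cont : Continuous G)
    -- cocompactness of the embedding relative to `D`
    (hcocompact : ∀ v : ℕ → X,
      (∀ g : ℕ → X ≃ₗᵢ[ℝ] X, (∀ k, g k ∈ D) → WeakNull (fun k => g k (v k))) →
      Tendsto (fun k => ‖ι (v k)‖) atTop (𝓝 0))
    (t : ℝ) (ht : 0 < t)
    (u : ℕ → X) (w : X)
    (hmin : Tendsto (fun k => F (u k)) atTop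
      (𝓝 (sInf (F '' {v : X | G (ι v) = t}))))
    (hGt : Tendsto (fun k => G (ι (u k))) atTop (𝓝 t))
    -- `u_k - w` converges `D`-weakly to zero
    (hDweak : ∀ g : ℕ → X ≃ₗᵢ[ℝ] X, (∀ k, g k ∈ D) →
      WeakNull (fun k => g k (u k - w))) :
    G (ι w) = t ∧ F w = sInf (F '' {v : X | G (ι v) = t}) := by

  -- ι(u_k - w) → 0 in norm
  have hnorm : Tendsto (fun k => ‖ι (u k - w)‖) atTop (𝓝 0) :=
    hcocompact (fun k => u k - w) hDweak
  have hιconv : Tendsto (fun k => ι (u k)) atTop (𝓝 (ι w)) := by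
    rw [tendsto_iff_norm_sub_tendsto_zero]
    simpa [map_sub] using hnorm
  -- G(ι w) = t
  have hGw : G (ι w) = t :=
    tendsto_nhds_unique ((hG_cont.tendsto _).comp hιconv) hGt
  refine ⟨hGw, ?_⟩
  -- w is in the constraint set
  have hmem : F w ∈ F '' {v : X | G (ι v) = t} := ⟨w, hGw, rfl⟩
  have hbdd : BddBelow (F '' {v : X | G (ι v) = t}) :=
    ⟨0, fun x ⟨v, _, hv⟩ => hv ▸ hF_nonneg v⟩
  have h1 : sInf (F '' {v : X | G (ι v) = t}) ≤ F w := csInf_le hbdd hmem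
  -- weak convergence of u to w
  have hwc : WeakConv u w := by
    intro φ
    have := hDweak (fun _ => 1) (fun _ => one_mem D) φ
    simp only [LinearIsometryEquiv.coe_one, id_eq, map_sub] at this
    have h2 := this.add_const (φ w)
    simpa using h2
  have h2 : F w ≤ sInf (F '' {v : X | G (ι v) = t}) := by
    have := hF_wlsc u w hwc
    rwa [hmin.liminf_eq] at this
  exact le_antisymm h2 h1
end

section
/- Separation of dislocations from distinct profiles: Let $X$ be a reflexive Banach space and $D$ a group of linear isometries satisfying: if $g_k \in D$, $g_k \not\rightharpoonup 0$, $u_k \rightharpoonup 0$, then $g_k u_k \rightharpoonup 0$ on a subsequence. Suppose $u_k$ is bounded, $(g_k^{(1)})^{-1} u_k \rightharpoonup w^{(1)}$, $v_k := u_k - g_k^{(1)} w^{(1)}$, and $(g_k^{(2)})^{-1} v_k \rightharpoonup w^{(2)} \neq 0$ with $g_k^{(1)}, g_k^{(2)} \in D$. Then $(g_k^{(1)})^{-1} g_k^{(2)} \rightharpoonup 0$ (elementwise weakly, on a subsequence). -/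
open Filter Topology

/-! Put `v_k = u_k - g¹_k w¹`, so that `(g¹_k)⁻¹ v_k ⇀ 0`. A sequence of operators `g_k` that
maps a weakly null sequence onto a sequence with nonzero weak limit must itself be elementwise
weakly null, since otherwise the transfer property would make the images weakly null along a
subsequence. Applied to `(g²_k)⁻¹ g¹_k` and the sequence `(g¹_k)⁻¹ v_k`, this shows
`(g²_k)⁻¹ g¹_k ⇀ 0`; applied next to `(g¹_k)⁻¹ g²_k` and the sequence `(g²_k)⁻¹ g¹_k w²`, whose
images are constantly `w² ≠ 0`, it gives the claim. -/

section WeakConvergence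

variable {X : Type*} [NormedAddCommGroup X] [NormedSpace ℝ X]

theorem WeakConv.weakNull_sub {u : ℕ → X} {w : X} (h : WeakConv u w) :
    WeakNull (fun k => u k - w) := fun φ => by
  simpa only [map_sub, sub_self] using (h φ).sub_const (φ w)

theorem WeakConv.eq_zero_of_weakNull_comp {u : ℕ → X} {w : X} (h : WeakConv u w)
    {ψ : ℕ → ℕ} (hψ : StrictMono ψ) (hnull : WeakNull (u ∘ ψ)) : w = 0 :=
  SeparatingDual.eq_zero_of_forall_dual_eq_zero (R := ℝ) fun φ =>
    tendsto_nhds_unique ((h φ).comp hψ.tendsto_atTop) (hnull φ)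

theorem weakNull_apply_of_weakConv_ne_zero {g : ℕ → X → X}
    (htransfer : ¬ (∀ x : X, WeakNull (fun k => g k x)) → ∀ u : ℕ → X, WeakNull u →
      ∃ ψ : ℕ → ℕ, StrictMono ψ ∧ WeakNull (fun k => g (ψ k) (u (ψ k))))
    {u : ℕ → X} (hu : WeakNull u) {w : X} (hw : w ≠ 0)
    (hgu : WeakConv (fun k => g k (u k)) w) (x : X) :
    WeakNull (fun k => g k x) := by
  by_contra hx
  obtain ⟨ψ, hψ, hnull⟩ := htransfer (fun h => hx (h x)) u hu
  exact hw (hgu.eq_zero_of_weakNull_comp hψ hnull)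

end WeakConvergence

theorem dislocations_separate_general {X : Type*}
    [NormedAddCommGroup X] [NormedSpace ℝ X]
    (D : Subgroup (X ≃ₗᵢ[ℝ] X))
    -- the transfer property (newii)
    (hnewii : ∀ g : ℕ → X ≃ₗᵢ[ℝ] X, (∀ k, g k ∈ D) →
      ¬ (∀ x : X, WeakNull (fun k => g k x)) → ∀ u : ℕ → X, WeakNull u →
        ∃ ψ : ℕ → ℕ, StrictMono ψ ∧ WeakNull (fun k => g (ψ k) (u (ψ k))))
    (u : ℕ → X)
    (g₁ g₂ : ℕ → X ≃ₗᵢ[ℝ] X) (hg₁ : ∀ k, g₁ k ∈ D) (hg₂ : ∀ k, g₂ k ∈ D)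
    (w₁ w₂ : X) (hw₂ : w₂ ≠ 0)
    (hconv₁ : WeakConv (fun k => (g₁ k)⁻¹ (u k)) w₁)
    (hconv₂ : WeakConv (fun k => (g₂ k)⁻¹ (u k - g₁ k w₁)) w₂) :
    ∃ ψ : ℕ → ℕ, StrictMono ψ ∧
      ∀ x : X, WeakNull (fun k => ((g₁ (ψ k))⁻¹ * g₂ (ψ k)) x) := by
  have hv : WeakNull (fun k => (g₁ k)⁻¹ (u k - g₁ k w₁)) := by
    simpa only [map_sub, LinearIsometryEquiv.coe_inv, LinearIsometryEquiv.symm_apply_apply]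
      using hconv₁.weakNull_sub
  have h₂₁ : ∀ x : X, WeakNull (fun k => ((g₂ k)⁻¹ * g₁ k) x) :=
    weakNull_apply_of_weakConv_ne_zero
      (hnewii _ fun k => mul_mem (inv_mem (hg₂ k)) (hg₁ k)) hv hw₂
      (by simpa only [LinearIsometryEquiv.coe_mul, LinearIsometryEquiv.coe_inv,
        Function.comp_apply, LinearIsometryEquiv.apply_symm_apply] using hconv₂)
  refine ⟨id, strictMono_id, weakNull_apply_of_weakConv_ne_zero
    (hnewii _ fun k => mul_mem (inv_mem (hg₁ k)) (hg₂ k)) (h₂₁ w₂) hw₂ ?_⟩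
  simp only [id, LinearIsometryEquiv.coe_mul, LinearIsometryEquiv.coe_inv, Function.comp_apply,
    LinearIsometryEquiv.apply_symm_apply, LinearIsometryEquiv.symm_apply_apply]
  exact fun φ => tendsto_const_nhds

/-- separation of dislocations from distinct profiles: if
`(g¹_k)⁻¹ u_k ⇀ w¹`, `v_k = u_k - g¹_k w¹` and `(g²_k)⁻¹ v_k ⇀ w² ≠ 0`, then
`(g¹_k)⁻¹ g²_k ⇀ 0` elementwise on a subsequence. -/
theorem dislocations_separate {X : Type*}
    [NormedAddCommGroup X] [NormedSpace ℝ X] [CompleteSpace X]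
    (D : Subgroup (X ≃ₗᵢ[ℝ] X))
    -- reflexivity: bounded sequences have weakly convergent subsequences
    (hrefl : ∀ u : ℕ → X, (∃ C : ℝ, ∀ k, ‖u k‖ ≤ C) →
      ∃ (ψ : ℕ → ℕ) (w : X), StrictMono ψ ∧ WeakConv (fun k => u (ψ k)) w)
    -- the transfer property (newii)
    (hnewii : ∀ g : ℕ → X ≃ₗᵢ[ℝ] X, (∀ k, g k ∈ D) →
      ¬ (∀ x : X, WeakNull (fun k => g k x)) → ∀ u : ℕ → X, WeakNull u →
        ∃ ψ : ℕ → ℕ, StrictMono ψ ∧ WeakNull (fun k => g (ψ k) (u (ψ k))))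
    (u : ℕ → X) (hu_bdd : ∃ C : ℝ, ∀ k, ‖u k‖ ≤ C)
    (g₁ g₂ : ℕ → X ≃ₗᵢ[ℝ] X) (hg₁ : ∀ k, g₁ k ∈ D) (hg₂ : ∀ k, g₂ k ∈ D)
    (w₁ w₂ : X) (hw₂ : w₂ ≠ 0)
    (hconv₁ : WeakConv (fun k => (g₁ k)⁻¹ (u k)) w₁)
    (hconv₂ : WeakConv (fun k => (g₂ k)⁻¹ (u k - g₁ k w₁)) w₂) :
    ∃ ψ : ℕ → ℕ, StrictMono ψ ∧
      ∀ x : X, WeakNull (fun k => ((g₁ (ψ k))⁻¹ * g₂ (ψ k)) x) :=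
  dislocations_separate_general D hnewii u g₁ g₂ hg₁ hg₂ w₁ w₂ hw₂ hconv₁ hconv₂
end

section
/- Isometries escaping to infinity induce weakly null composition operators: Let $M$ be a complete Riemannian manifold cocompact under its isometry group, and let $\eta_k \in Iso(M)$ be such that for some $x_0 \in M$ the sequence $\eta_k(x_0)$ has no convergent subsequence. Then the operators $T_k : u \mapsto u \circ \eta_k$ on $L^2(M)$ (or $W^{1,p}(M)$) converge weakly to zero elementwise: for every $u$, $T_k u \rightharpoonup 0$. -/
/-!
In a proper space an orbit `η k x₀` without convergent subsequence leaves every compact set, so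
`dist (η k x₀) x₀ → ∞`. Once `2 R < dist (η k x₀) x₀`, the isometry `η k` moves the ball
`B = closedBall x₀ R` off itself, hence `∫ u (η k x) * v x` only sees the parts of `u` and `v`
outside `B`. Cauchy–Schwarz and the invariance of the `L²` norm under `η k` bound it by
`‖1_Bᶜ u‖ ‖v‖ + ‖u‖ ‖1_Bᶜ v‖`, uniformly in such `k`, and this tends to `0` as `R → ∞`.
-/

open Filter Topology MeasureTheory Metric
open scoped ENNReal

theorem tendsto_cocompact_of_not_exists_tendsto_subseq {X : Type*} [TopologicalSpace X]
    [FirstCountableTopology X] {x : ℕ → X}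
    (h : ¬ ∃ (φ : ℕ → ℕ) (a : X), StrictMono φ ∧ Tendsto (x ∘ φ) atTop (𝓝 a)) :
    Tendsto x atTop (cocompact X) := by
  refine hasBasis_cocompact.tendsto_right_iff.2 fun K hK => ?_
  by_contra hfreq
  obtain ⟨a, -, φ, hφ, hlim⟩ :=
    hK.tendsto_subseq' (not_eventually.1 hfreq |>.mono fun _ => not_not.1)
  exact h ⟨φ, a, hφ, hlim⟩

theorem disjoint_preimage_closedBall_of_two_mul_lt_dist {M : Type*} [PseudoMetricSpace M]
    {f : M → M} (hf : Isometry f) {x₀ : M} {R : ℝ} (hR : 2 * R < dist (f x₀) x₀) :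
    Disjoint (f ⁻¹' closedBall x₀ R) (closedBall x₀ R) := by
  refine Set.disjoint_left.2 fun x hfx hx => ?_
  have := dist_triangle (f x₀) (f x) x₀
  rw [hf.dist_eq, dist_comm x₀ x] at this
  linarith [mem_closedBall.1 hfx, mem_closedBall.1 hx]

section CauchySchwarz

variable {α : Type*} [MeasurableSpace α] {μ : Measure α} {f g : α → ℝ}

theorem integral_mul_eq_inner_toLp (hf : MemLp f 2 μ) (hg : MemLp g 2 μ) :
    ∫ x, f x * g x ∂μ = inner ℝ (hf.toLp f) (hg.toLp g) := by
  rw [L2.inner_def]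
  refine integral_congr_ae ?_
  filter_upwards [hf.coeFn_toLp, hg.coeFn_toLp] with x hfx hgx
  simp [hfx, hgx, mul_comm]

theorem abs_integral_mul_le_eLpNorm_mul_eLpNorm (hf : MemLp f 2 μ) (hg : MemLp g 2 μ) :
    |∫ x, f x * g x ∂μ| ≤ (eLpNorm f 2 μ).toReal * (eLpNorm g 2 μ).toReal := by
  rw [integral_mul_eq_inner_toLp hf hg, ← Lp.norm_toLp f hf, ← Lp.norm_toLp g hg]
  exact abs_real_inner_le_norm _ _

end CauchySchwarz

section Tails

variable {M : Type*} [PseudoMetricSpace M] [MeasurableSpace M] [OpensMeasurableSpace M]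
  {μ : Measure M} (x₀ : M)

theorem tendsto_setLIntegral_compl_closedBall {f : M → ℝ≥0∞} (hf : ∫⁻ x, f x ∂μ ≠ ∞) :
    Tendsto (fun R : ℝ => ∫⁻ x in (closedBall x₀ R)ᶜ, f x ∂μ) atTop (𝓝 0) := by
  have : IsFiniteMeasure (μ.withDensity f) := isFiniteMeasure_withDensity hf
  have hempty : ⋂ R : ℝ, (closedBall x₀ R)ᶜ = ∅ :=
    Set.iInter_eq_empty_iff.2 fun x => ⟨dist x x₀, not_not.2 (mem_closedBall.2 le_rfl)⟩
  have h := tendsto_measure_iInter_atTop (μ := μ.withDensity f)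
    (s := fun R : ℝ => (closedBall x₀ R)ᶜ)
    (fun R => measurableSet_closedBall.compl.nullMeasurableSet)
    (fun R R' hRR' => Set.compl_subset_compl.2 (closedBall_subset_closedBall hRR'))
    ⟨0, measure_ne_top _ _⟩
  rw [hempty, measure_empty] at h
  exact h.congr fun R => withDensity_apply f measurableSet_closedBall.compl

theorem MeasureTheory.MemLp.tendsto_eLpNorm_indicator_compl_closedBall {E : Type*}
    [NormedAddCommGroup E] {p : ℝ≥0∞} {u : M → E} (hu : MemLp u p μ) (hp0 : p ≠ 0) (hp : p ≠ ∞) :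
    Tendsto (fun R : ℝ => eLpNorm ((closedBall x₀ R)ᶜ.indicator u) p μ) atTop (𝓝 0) := by
  simp_rw [eLpNorm_indicator_eq_eLpNorm_restrict measurableSet_closedBall.compl,
    eLpNorm_eq_lintegral_rpow_enorm_toReal hp0 hp]
  have hfin := lintegral_rpow_enorm_lt_top_of_eLpNorm_lt_top hp0 hp hu.2
  have hpos : 0 < 1 / p.toReal := one_div_pos.2 (ENNReal.toReal_pos hp0 hp)
  have hcont := (ENNReal.continuous_rpow_const (y := 1 / p.toReal)).tendsto 0
  rw [ENNReal.zero_rpow_of_pos hpos] at hcont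
  exact hcont.comp (tendsto_setLIntegral_compl_closedBall x₀ hfin.ne)

end Tails

theorem tendsto_zero_of_forall_eventually_abs_le {ι : Type*} {l : Filter ι} [l.NeBot]
    {a : ℕ → ℝ} {b : ι → ℝ} (hb : Tendsto b l (𝓝 0)) (h : ∀ i, ∀ᶠ k in atTop, |a k| ≤ b i) :
    Tendsto a atTop (𝓝 0) := by
  refine Metric.tendsto_nhds.2 fun ε hε => ?_
  obtain ⟨i, hi⟩ := (hb.eventually (gt_mem_nhds hε)).exists
  filter_upwards [h i] with k hk
  simpa [Real.dist_eq] using hk.trans_lt hi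

section IsometryIntegral

variable {M : Type*} [PseudoMetricSpace M] [MeasurableSpace M] [OpensMeasurableSpace M]
  {μ : Measure M} {f : M → M} {u v : M → ℝ}

theorem abs_integral_comp_mul_le_of_two_mul_lt_dist (hf : Isometry f)
    (hμ : MeasurePreserving f μ μ) (hu : MemLp u 2 μ) (hv : MemLp v 2 μ) {x₀ : M} {R : ℝ}
    (hR : 2 * R < dist (f x₀) x₀) :
    |∫ x, u (f x) * v x ∂μ| ≤
      (eLpNorm ((closedBall x₀ R)ᶜ.indicator u) 2 μ).toReal * (eLpNorm v 2 μ).toReal +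
        (eLpNorm u 2 μ).toReal * (eLpNorm ((closedBall x₀ R)ᶜ.indicator v) 2 μ).toReal := by
  set s := closedBall x₀ R
  have hs : MeasurableSet s := measurableSet_closedBall
  have hcomp {w : M → ℝ} (hw : MemLp w 2 μ) : MemLp (fun x => w (f x)) 2 μ :=
    hw.comp_measurePreserving hμ
  have hnorm {w : M → ℝ} (hw : MemLp w 2 μ) : eLpNorm (fun x => w (f x)) 2 μ = eLpNorm w 2 μ :=
    eLpNorm_comp_measurePreserving hw.1 hμ
  have hnear : ∀ x, s.indicator u (f x) * s.indicator v x = 0 := fun x => by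
    by_cases hx : x ∈ s
    · have hfx : f x ∉ s := fun hfx =>
        Set.disjoint_right.1 (disjoint_preimage_closedBall_of_two_mul_lt_dist hf hR) hx hfx
      simp [Set.indicator_of_notMem hfx]
    · simp [Set.indicator_of_notMem hx]
  have hsplit : ∫ x, u (f x) * v x ∂μ =
      ∫ x, sᶜ.indicator u (f x) * v x ∂μ + ∫ x, s.indicator u (f x) * sᶜ.indicator v x ∂μ := by
    have htail : Integrable (fun x => sᶜ.indicator u (f x) * v x) μ :=
      (hcomp (hu.indicator hs.compl)).integrable_mul hv
    have hcross : Integrable (fun x => s.indicator u (f x) * sᶜ.indicator v x) μ :=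
      (hcomp (hu.indicator hs)).integrable_mul (hv.indicator hs.compl)
    rw [← integral_add htail hcross]
    refine integral_congr_ae (Eventually.of_forall fun x => ?_)
    have hux : s.indicator u (f x) + sᶜ.indicator u (f x) = u (f x) :=
      congrFun (Set.indicator_self_add_compl s u) (f x)
    have hvx : s.indicator v x + sᶜ.indicator v x = v x :=
      congrFun (Set.indicator_self_add_compl s v) x
    linear_combination (-v x) * hux - s.indicator u (f x) * hvx + hnear x
  rw [hsplit]
  refine (abs_add_le _ _).trans (add_le_add ?_ ?_)
  · simpa only [hnorm (hu.indicator hs.compl)] using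
      abs_integral_mul_le_eLpNorm_mul_eLpNorm (hcomp (hu.indicator hs.compl)) hv
  · refine (abs_integral_mul_le_eLpNorm_mul_eLpNorm (hcomp (hu.indicator hs))
      (hv.indicator hs.compl)).trans ?_
    rw [hnorm (hu.indicator hs)]
    exact mul_le_mul_of_nonneg_right (ENNReal.toReal_mono hu.2.ne (eLpNorm_indicator_le u))
      ENNReal.toReal_nonneg

end IsometryIntegral

theorem escaping_isometries_weakly_null_general {M : Type*} [MetricSpace M]
    [ProperSpace M] [MeasurableSpace M] [BorelSpace M]
    (μ : Measure M)
    (η : ℕ → M ≃ᵢ M)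
    -- isometries preserve the (Riemannian) measure
    (hpres : ∀ k, MeasurePreserving (η k) μ μ)
    (x₀ : M)
    -- `η_k(x₀)` has no convergent subsequence
    (hesc : ¬ ∃ (ψ : ℕ → ℕ) (x : M), StrictMono ψ ∧
      Tendsto (fun k => η (ψ k) x₀) atTop (𝓝 x))
    (u : M → ℝ) (hu : MemLp u 2 μ) :
    ∀ v : M → ℝ, MemLp v 2 μ →
      Tendsto (fun k => ∫ x, u (η k x) * v x ∂μ) atTop (𝓝 0) := by
  intro v hv
  have hdist : Tendsto (fun k => dist (η k x₀) x₀) atTop atTop :=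
    (tendsto_dist_right_cocompact_atTop x₀).comp
      (tendsto_cocompact_of_not_exists_tendsto_subseq hesc)
  have htail {w : M → ℝ} (hw : MemLp w 2 μ) :
      Tendsto (fun R : ℝ => (eLpNorm ((closedBall x₀ R)ᶜ.indicator w) 2 μ).toReal)
        atTop (𝓝 0) :=
    (ENNReal.tendsto_toReal ENNReal.zero_ne_top).comp
      (hw.tendsto_eLpNorm_indicator_compl_closedBall x₀ two_ne_zero ENNReal.ofNat_ne_top)
  have hbound := ((htail hu).mul_const (eLpNorm v 2 μ).toReal).add
    ((htail hv).const_mul (eLpNorm u 2 μ).toReal)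
  rw [zero_mul, mul_zero, add_zero] at hbound
  refine tendsto_zero_of_forall_eventually_abs_le hbound fun R => ?_
  filter_upwards [hdist.eventually_gt_atTop (2 * R)] with k hk
  exact abs_integral_comp_mul_le_of_two_mul_lt_dist (η k).isometry (hpres k) hu hv hk

/-- isometries escaping to infinity induce weakly null
composition operators. `M` is modeled as a complete, proper metric measure
space (a complete Riemannian manifold with its volume), cocompact under its
isometry group; if `η_k(x₀)` has no convergent subsequence, then for every
`u ∈ L²(M)` the sequence `u ∘ η_k` converges weakly to `0` in `L²`:
`∫ u(η_k x) v(x) dμ → 0` for every `v ∈ L²(M)`. -/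
theorem escaping_isometries_weakly_null {M : Type*} [MetricSpace M]
    [CompleteSpace M] [ProperSpace M] [MeasurableSpace M] [BorelSpace M]
    (μ : Measure M)
    -- cocompactness of `M` under its full isometry group
    (hcocompact : ∃ V : Set M, IsCompact V ∧
      (⋃ η : M ≃ᵢ M, η '' V) = Set.univ)
    (η : ℕ → M ≃ᵢ M)
    -- isometries preserve the (Riemannian) measure
    (hpres : ∀ k, MeasurePreserving (η k) μ μ)
    (x₀ : M)
    -- `η_k(x₀)` has no convergent subsequence
    (hesc : ¬ ∃ (ψ : ℕ → ℕ) (x : M), StrictMono ψ ∧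
      Tendsto (fun k => η (ψ k) x₀) atTop (𝓝 x))
    (u : M → ℝ) (hu : MemLp u 2 μ) :
    ∀ v : M → ℝ, MemLp v 2 μ →
      Tendsto (fun k => ∫ x, u (η k x) * v x ∂μ) atTop (𝓝 0) :=
  escaping_isometries_weakly_null_general μ η hpres x₀ hesc u hu
end
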